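/- Let (W,S) be a Coxeter system. For any u, v ∈ W, the maximum of {u'v : u' ≤ u}, the maximum of {uv' : v' ≤ v}, and the maximum of {u'v' : u' ≤ u, v' ≤ v} (all with respect to the Bruhat order) exist and are all equal. This common element is denoted u ∘ v, the optimization operator. -/

import Mathlib

/-!
Tits' representation of `W` by signed permutations of `W × {±1}` gives a cocycle `η(w, t) = ±1`
which is `-1` exactly when the reflection `t` is a right inversion of `w`. It yields the strong
exchange and deletion conditions, hence that the subword order agrees with the order generated by
`u < ut` (`t` a reflection, `ℓ u < ℓ (ut)`), and with it Deodhar's property Z: for a right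
descent `s` of `v`, `u ≤ v` implies `u ≤ vs` or `us ≤ vs`. Consequently `u ≤ v` gives `us ≤ vs`
when `v < vs`, and `us ≤ v` when `vs < v`.

The maximum `u ∘ v` is built by induction on `ℓ v`. Write `v = v₁ s` with `v₁ < v` and
`m₁ = u ∘ v₁ = a v₁ = u b`. If `m₁ < m₁ s`, then `u ∘ v = m₁ s = a v = u (b s)`. Otherwise
`u ∘ v = m₁ = u b`; since `s` is a descent of `a v₁` but not of `v₁`, the cocycle identity
`η(a v₁, s) = η(v₁, s) η(a, v₁ s v₁⁻¹)` makes `r = v₁ s v₁⁻¹` a right inversion of `a`, and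
`m₁ = (a r) v` with `a r < a`.
-/

/-- The Bruhat order on a Coxeter group. -/
def bruhatLE {B W : Type*} [Group W] {M : CoxeterMatrix B} (cs : CoxeterSystem M W)
    (u v : W) : Prop :=
  ∃ ω : List B, cs.IsReduced ω ∧ cs.wordProd ω = v ∧
    ∃ ω' : List B, ω'.Sublist ω ∧ cs.IsReduced ω' ∧ cs.wordProd ω' = u

namespace CoxeterSystem

variable {B W : Type*} [Group W] {M : CoxeterMatrix B} (cs : CoxeterSystem M W)

local prefix:100 "s " => cs.simple
local prefix:100 "π " => cs.wordProd
local prefix:100 "ℓ " => cs.length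
local prefix:100 "ris " => cs.rightInvSeq

section SignedReflections

open scoped Classical

noncomputable def signedReflPerm (i : B) : Equiv.Perm (W × ℤˣ) :=
  Function.Involutive.toPerm (fun p => (s i * p.1 * s i, if p.1 = s i then -p.2 else p.2)) <| by
    rintro ⟨t, e⟩
    have hconj : s i * t * s i = s i ↔ t = s i := by
      constructor
      · intro h
        simpa [mul_assoc, cs.simple_mul_simple_cancel_left] using congrArg (s i * · * s i) h
      · rintro rfl
        simp [cs.simple_mul_simple_self]
    by_cases ht : t = s i
    · subst ht
      simp [cs.simple_mul_simple_self]
    · dsimp only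
      rw [if_neg (mt hconj.mp ht), if_neg ht]
      simp [mul_assoc, cs.simple_mul_simple_cancel_left]

theorem signedReflPerm_apply (i : B) (p : W × ℤˣ) :
    cs.signedReflPerm i p = (s i * p.1 * s i, if p.1 = s i then -p.2 else p.2) :=
  rfl

theorem prod_map_signedReflPerm (ω : List B) (p : W × ℤˣ) :
    (ω.map cs.signedReflPerm).prod p =
      (π ω * p.1 * (π ω)⁻¹, p.2 * (-1) ^ (ris ω).count p.1) := by
  induction ω generalizing p with
  | nil => simp
  | cons i ω ih =>
    have hmem : π ω * p.1 * (π ω)⁻¹ = s i ↔ (π ω)⁻¹ * s i * π ω = p.1 := by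
      constructor <;> intro h <;> rw [← h] <;> group
    rw [List.map_cons, List.prod_cons, Equiv.Perm.mul_apply, ih, signedReflPerm_apply,
      rightInvSeq, List.count_cons, cs.wordProd_cons]
    refine Prod.ext (by simp [mul_assoc, cs.inv_simple]) ?_
    by_cases h : π ω * p.1 * (π ω)⁻¹ = s i
    · simp only [if_pos h, beq_iff_eq, if_pos (hmem.mp h), pow_succ, mul_neg, mul_one]
    · simp only [if_neg h, beq_iff_eq, if_neg (mt hmem.mpr h), add_zero]

theorem conj_alternatingWord (i j : B) (n : ℕ) :
    (π (alternatingWord i j n))⁻¹ * s (if Even n then j else i) * π (alternatingWord i j n) =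
      s j * (s i * s j) ^ n := by
  have hpow : ∀ k : ℕ, ((s i * s j) ^ k)⁻¹ * s j = s j * (s i * s j) ^ k := by
    intro k
    induction k with
    | zero => simp
    | succ k ih =>
      calc ((s i * s j) ^ (k + 1))⁻¹ * s j = (s i * s j)⁻¹ * (((s i * s j) ^ k)⁻¹ * s j) := by
            rw [pow_succ, mul_inv_rev, mul_assoc]
        _ = s j * (s i * s j) ^ (k + 1) := by
            rw [ih, pow_succ', mul_inv_rev, cs.inv_simple, cs.inv_simple]
            simp only [mul_assoc]
  obtain ⟨k, rfl | rfl⟩ := Nat.even_or_odd' n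
  · rw [cs.prod_alternatingWord_eq_mul_pow, if_pos (even_two_mul k), if_pos (even_two_mul k),
      Nat.mul_div_cancel_left k two_pos, one_mul, hpow, mul_assoc, ← pow_add, two_mul]
  · have hodd : ¬ Even (2 * k + 1) := Nat.not_even_iff_odd.mpr (odd_two_mul_add_one k)
    have hdiv : (2 * k + 1) / 2 = k := by omega
    rw [cs.prod_alternatingWord_eq_mul_pow, if_neg hodd, if_neg hodd, hdiv, mul_inv_rev,
      cs.inv_simple]
    calc ((s i * s j) ^ k)⁻¹ * s j * s i * (s j * (s i * s j) ^ k)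
        = ((s i * s j) ^ k)⁻¹ * s j * ((s i * s j) * (s i * s j) ^ k) := by
          simp only [mul_assoc]
      _ = s j * (s i * s j) ^ (2 * k + 1) := by
        rw [hpow, mul_assoc, ← pow_succ', ← pow_add, two_mul, add_assoc]

theorem rightInvSeq_alternatingWord (i j : B) (n : ℕ) :
    ris (alternatingWord i j n) =
      ((List.range n).map fun k => s j * (s i * s j) ^ k).reverse := by
  induction n with
  | zero => simp [alternatingWord]
  | succ n ih =>
    rw [alternatingWord_succ', rightInvSeq, conj_alternatingWord, ih, List.range_succ]
    simp

theorem isLiftable_signedReflPerm : M.IsLiftable cs.signedReflPerm := by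
  intro i j
  have hprod : ∀ m : ℕ, ((alternatingWord i j (2 * m)).map cs.signedReflPerm).prod =
      (cs.signedReflPerm i * cs.signedReflPerm j) ^ m := by
    intro m
    induction m with
    | zero => simp [alternatingWord]
    | succ m ih =>
      have hodd : ¬ Even (2 * m + 1) := Nat.not_even_iff_odd.mpr (odd_two_mul_add_one m)
      rw [mul_add_one, alternatingWord_succ', alternatingWord_succ', if_neg hodd,
        if_pos (even_two_mul m), List.map_cons, List.map_cons, List.prod_cons, List.prod_cons, ih,
        pow_succ', mul_assoc]
  have hone : π (alternatingWord i j (2 * M i j)) = 1 := by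
    rw [cs.prod_alternatingWord_eq_mul_pow, if_pos (even_two_mul _),
      Nat.mul_div_cancel_left _ two_pos, one_mul, cs.simple_mul_simple_pow]
  -- The inversion sequence of the braid relator runs twice through the same `M i j` reflections.
  have heven : ∀ t : W, Even ((ris (alternatingWord i j (2 * M i j))).count t) := by
    intro t
    have hperiod : ∀ k, s j * (s i * s j) ^ (M i j + k) = s j * (s i * s j) ^ k := by
      intro k
      rw [pow_add, cs.simple_mul_simple_pow, one_mul]
    rw [rightInvSeq_alternatingWord, List.count_reverse, two_mul, List.range_add, List.map_append,
      List.map_map, List.count_append]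
    simp only [Function.comp_def, hperiod]
    exact Even.add_self _
  ext p : 1
  rw [← hprod, prod_map_signedReflPerm, hone, (heven p.1).neg_one_pow]
  simp

noncomputable def signedReflRep : W →* Equiv.Perm (W × ℤˣ) :=
  cs.lift ⟨cs.signedReflPerm, cs.isLiftable_signedReflPerm⟩

theorem signedReflRep_wordProd (ω : List B) (p : W × ℤˣ) :
    cs.signedReflRep (π ω) p = (π ω * p.1 * (π ω)⁻¹, p.2 * (-1) ^ (ris ω).count p.1) := by
  rw [← prod_map_signedReflPerm, wordProd, map_list_prod, List.map_map]
  congr 3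
  funext i
  simp [signedReflRep]

noncomputable def inversionSign (w t : W) : ℤˣ :=
  (cs.signedReflRep w (t, 1)).2

theorem inversionSign_wordProd (ω : List B) (t : W) :
    cs.inversionSign (π ω) t = (-1) ^ (ris ω).count t := by
  rw [inversionSign, signedReflRep_wordProd, one_mul]

theorem signedReflRep_apply (w : W) (p : W × ℤˣ) :
    cs.signedReflRep w p = (w * p.1 * w⁻¹, p.2 * cs.inversionSign w p.1) := by
  obtain ⟨ω, -, rfl⟩ := cs.exists_isReduced w
  rw [signedReflRep_wordProd, inversionSign_wordProd]

theorem inversionSign_one (t : W) : cs.inversionSign 1 t = 1 := by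
  simp [inversionSign]

theorem inversionSign_mul (u v t : W) :
    cs.inversionSign (u * v) t = cs.inversionSign v t * cs.inversionSign u (v * t * v⁻¹) := by
  rw [inversionSign, map_mul, Equiv.Perm.mul_apply, signedReflRep_apply cs v,
    signedReflRep_apply cs u, one_mul]

theorem inversionSign_simple (i : B) (t : W) :
    cs.inversionSign (s i) t = if t = s i then -1 else 1 := by
  rw [← cs.wordProd_singleton i, inversionSign_wordProd, rightInvSeq_singleton,
    List.count_singleton]
  by_cases h : t = s i <;> simp [h, Ne.symm]

theorem mem_rightInvSeq_of_inversionSign_eq_neg_one {ω : List B} {t : W}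
    (h : cs.inversionSign (π ω) t = -1) : t ∈ ris ω := by
  rw [inversionSign_wordProd] at h
  refine List.count_pos_iff.mp (Nat.pos_of_ne_zero fun h0 => ?_)
  rw [h0, pow_zero] at h
  exact absurd h (by decide)

end SignedReflections

theorem inversionSign_self {t : W} (ht : cs.IsReflection t) : cs.inversionSign t t = -1 := by
  obtain ⟨u, i, rfl⟩ := ht
  have hsplit : cs.inversionSign (u * s i * u⁻¹) (u * s i * u⁻¹) =
      cs.inversionSign u⁻¹ (u * s i * u⁻¹) * cs.inversionSign (u * s i) (s i) := by
    rw [inversionSign_mul]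
    congr 2
    group
  have hsimple : cs.inversionSign (u * s i) (s i) = -cs.inversionSign u (s i) := by
    rw [inversionSign_mul, inversionSign_simple, if_pos rfl, cs.inv_simple,
      cs.simple_mul_simple_cancel_right, neg_one_mul]
  have hinv : cs.inversionSign u⁻¹ (u * s i * u⁻¹) * cs.inversionSign u (s i) = 1 := by
    have := cs.inversionSign_mul u u⁻¹ (u * s i * u⁻¹)
    rwa [mul_inv_cancel, inversionSign_one, show u⁻¹ * (u * s i * u⁻¹) * u⁻¹⁻¹ = s i by group,
      eq_comm] at this
  rw [hsplit, hsimple, mul_neg, hinv]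

theorem length_mul_lt_of_inversionSign_eq_neg_one {w t : W} (h : cs.inversionSign w t = -1) :
    ℓ (w * t) < ℓ w := by
  obtain ⟨ω, hω, rfl⟩ := cs.exists_isReduced w
  exact (cs.isRightInversion_of_mem_rightInvSeq hω
    (cs.mem_rightInvSeq_of_inversionSign_eq_neg_one h)).2

theorem inversionSign_eq_neg_one_iff {w t : W} (ht : cs.IsReflection t) :
    cs.inversionSign w t = -1 ↔ ℓ (w * t) < ℓ w := by
  refine ⟨cs.length_mul_lt_of_inversionSign_eq_neg_one, fun h => ?_⟩
  have hflip : cs.inversionSign w t = -cs.inversionSign (w * t) t := by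
    conv_lhs => rw [← mul_inv_cancel_right w t, ht.inv]
    rw [inversionSign_mul, inversionSign_self cs ht, ht.inv, ht.mul_self, one_mul, neg_one_mul]
  rcases Int.units_eq_one_or (cs.inversionSign (w * t) t) with h1 | h1
  · rw [hflip, h1]
  · have := cs.length_mul_lt_of_inversionSign_eq_neg_one h1
    rw [mul_assoc, ht.mul_self, mul_one] at this
    omega

/-- The strong exchange condition. -/
theorem mem_rightInvSeq_of_length_mul_lt {ω : List B} {t : W} (ht : cs.IsReflection t)
    (h : ℓ (π ω * t) < ℓ (π ω)) : t ∈ ris ω :=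
  cs.mem_rightInvSeq_of_inversionSign_eq_neg_one ((inversionSign_eq_neg_one_iff cs ht).mpr h)

theorem exists_eraseIdx_of_length_mul_lt {ω : List B} {t : W} (ht : cs.IsReflection t)
    (h : ℓ (π ω * t) < ℓ (π ω)) : ∃ j < ω.length, π ω * t = π (ω.eraseIdx j) := by
  obtain ⟨j, hj, rfl⟩ := List.mem_iff_getElem.mp (cs.mem_rightInvSeq_of_length_mul_lt ht h)
  rw [length_rightInvSeq] at hj
  exact ⟨j, hj, by rw [← List.getD_eq_getElem _ 1, wordProd_mul_getD_rightInvSeq]⟩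

/-- The deletion condition. -/
theorem exists_isReduced_sublist (ω : List B) :
    ∃ ω' : List B, ω'.Sublist ω ∧ cs.IsReduced ω' ∧ π ω' = π ω := by
  induction ω using List.reverseRecOn with
  | nil => exact ⟨[], List.Sublist.refl _, by simp [IsReduced], rfl⟩
  | append_singleton ω i ih =>
    obtain ⟨ω', hsub, hred, hprod⟩ := ih
    have hprod_i : π (ω ++ [i]) = π ω' * s i := by
      rw [wordProd_append, wordProd_singleton, hprod]
    rcases cs.length_mul_simple (π ω') i with hasc | hdesc
    · refine ⟨ω' ++ [i], hsub.append (List.Sublist.refl _), ?_, by rw [hprod_i, wordProd_append,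
        wordProd_singleton]⟩
      rw [IsReduced, wordProd_append, wordProd_singleton, hasc, hred.eq, List.length_append,
        List.length_singleton]
    · obtain ⟨j, hj, herase⟩ :=
        cs.exists_eraseIdx_of_length_mul_lt (ω := ω') (cs.isReflection_simple i) (by omega)
      refine ⟨ω'.eraseIdx j, ((List.eraseIdx_sublist ω' j).trans hsub).trans
        (List.sublist_append_left ω [i]), ?_, by rw [hprod_i, herase]⟩
      have := List.length_eraseIdx_add_one hj
      rw [IsReduced, ← herase]
      have := hred.eq
      omega

def BruhatStep (u w : W) : Prop :=
  cs.IsReflection (u⁻¹ * w) ∧ ℓ u < ℓ w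

def BruhatChain : W → W → Prop :=
  Relation.ReflTransGen cs.BruhatStep

variable {cs}

theorem bruhatStep_mul {u t : W} (ht : cs.IsReflection t) (h : ℓ u < ℓ (u * t)) :
    cs.BruhatStep u (u * t) :=
  ⟨by rwa [inv_mul_cancel_left], h⟩

theorem BruhatStep.mul_inv_mul {u w : W} (h : cs.BruhatStep u w) : w * (u⁻¹ * w) = u :=
  calc w * (u⁻¹ * w) = u * ((u⁻¹ * w) * (u⁻¹ * w)) := by group
    _ = u := by rw [h.1.mul_self, mul_one]

theorem BruhatStep.isReflection_conj_simple {u w : W} (h : cs.BruhatStep u w) (i : B) :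
    cs.IsReflection ((u * s i)⁻¹ * (w * s i)) := by
  simpa [mul_assoc, cs.inv_simple] using h.1.conj (s i)

theorem bruhatStep_mul_simple {w : W} {i : B} (h : ℓ w < ℓ (w * s i)) :
    cs.BruhatStep w (w * s i) :=
  bruhatStep_mul (cs.isReflection_simple i) h

theorem bruhatStep_of_length_mul_lt {w t : W} (ht : cs.IsReflection t) (h : ℓ (w * t) < ℓ w) :
    cs.BruhatStep (w * t) w := by
  have := bruhatStep_mul (u := w * t) ht (by rwa [mul_assoc, ht.mul_self, mul_one])
  rwa [mul_assoc, ht.mul_self, mul_one] at this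

theorem bruhatStep_of_length_mul_simple_lt {w : W} {i : B} (h : ℓ (w * s i) < ℓ w) :
    cs.BruhatStep (w * s i) w :=
  bruhatStep_of_length_mul_lt (cs.isReflection_simple i) h

theorem BruhatStep.mul_simple_of_length_lt {u w : W} {i : B} (h : cs.BruhatStep u w)
    (hw : ℓ w < ℓ (w * s i)) : cs.BruhatStep (u * s i) (w * s i) := by
  refine ⟨h.isReflection_conj_simple i, ?_⟩
  have := h.2
  rcases cs.length_mul_simple u i with hu | hu <;>
    rcases cs.length_mul_simple w i with hw' | hw' <;> omega

theorem BruhatStep.mul_simple_of_ne {u w : W} {i : B} (h : cs.BruhatStep u w)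
    (hne : u ≠ w * s i) : cs.BruhatStep (u * s i) (w * s i) := by
  set t := u⁻¹ * w
  have hwt : w * t = u := h.mul_inv_mul
  have hts : t ≠ s i := fun e => hne (by rw [← hwt, e])
  -- `t` is a right inversion of `w = (w sᵢ) sᵢ` other than `sᵢ`, so `sᵢ t sᵢ` is one of `w sᵢ`.
  have hsign : cs.inversionSign (w * s i) (s i * t * s i) = -1 :=
    calc cs.inversionSign (w * s i) (s i * t * s i)
        = cs.inversionSign (s i) t * cs.inversionSign (w * s i) (s i * t * (s i)⁻¹) := by
          rw [inversionSign_simple, if_neg hts, one_mul, cs.inv_simple]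
      _ = cs.inversionSign w t := by
          rw [← inversionSign_mul, cs.simple_mul_simple_cancel_right]
      _ = -1 := (inversionSign_eq_neg_one_iff cs h.1).mpr (by rw [hwt]; exact h.2)
  refine ⟨h.isReflection_conj_simple i, ?_⟩
  have := cs.length_mul_lt_of_inversionSign_eq_neg_one hsign
  rwa [show w * s i * (s i * t * s i) = u * s i by
    rw [← hwt]; simp only [mul_assoc, cs.simple_mul_simple_cancel_left]] at this

namespace BruhatChain

theorem refl (u : W) : cs.BruhatChain u u :=
  Relation.ReflTransGen.refl

theorem trans {u v w : W} (h₁ : cs.BruhatChain u v) (h₂ : cs.BruhatChain v w) :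
    cs.BruhatChain u w :=
  Relation.ReflTransGen.trans h₁ h₂

theorem tail {u v w : W} (h₁ : cs.BruhatChain u v) (h₂ : cs.BruhatStep v w) :
    cs.BruhatChain u w :=
  Relation.ReflTransGen.tail h₁ h₂

/-- Deodhar's property Z. -/
theorem le_mul_simple_or {u v : W} {i : B} (hv : ℓ (v * s i) < ℓ v) (h : cs.BruhatChain u v) :
    cs.BruhatChain u (v * s i) ∨ cs.BruhatChain (u * s i) (v * s i) := by
  induction h with
  | refl => exact Or.inr (refl _)
  | @tail w v huw hwv ih =>
    by_cases hw : w = v * s i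
    · exact Or.inl (hw ▸ huw)
    have hstep := hwv.mul_simple_of_ne hw
    rcases cs.length_mul_simple w i with hasc | hdesc
    · exact Or.inl ((huw.tail (bruhatStep_mul_simple (by omega))).tail hstep)
    · exact (ih (by omega)).imp (·.tail hstep) (·.tail hstep)

mutual

theorem mul_simple {u v : W} {i : B} (hv : ℓ v < ℓ (v * s i))
    (h : cs.BruhatChain u v) : cs.BruhatChain (u * s i) (v * s i) := by
  rcases Relation.ReflTransGen.cases_tail h with hvu | ⟨w, huw, hwv⟩
  · exact hvu ▸ refl _
  have hlen := hwv.2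
  rcases cs.length_mul_simple w i with hasc | hdesc
  · exact (mul_simple (by omega) huw).tail (hwv.mul_simple_of_length_lt hv)
  · exact ((mul_simple_le (by omega) huw).tail hwv).tail (bruhatStep_mul_simple hv)
termination_by cs.length v

theorem mul_simple_le {u w : W} {i : B} (hw : ℓ (w * s i) < ℓ w)
    (h : cs.BruhatChain u w) : cs.BruhatChain (u * s i) w := by
  rcases cs.length_mul_simple u i with hasc | hdesc
  · rcases le_mul_simple_or hw h with hu | hu
    · have := mul_simple (by rw [cs.simple_mul_simple_cancel_right]; omega) hu
      rwa [cs.simple_mul_simple_cancel_right] at this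
    · exact hu.tail (bruhatStep_of_length_mul_simple_lt hw)
  · exact (Relation.ReflTransGen.single (bruhatStep_of_length_mul_simple_lt (by omega))).trans h
termination_by cs.length w

end

end BruhatChain

theorem bruhatChain_wordProd_of_sublist {ω ω' : List B} (hω : cs.IsReduced ω)
    (h : ω'.Sublist ω) : cs.BruhatChain (π ω') (π ω) := by
  induction ω using List.reverseRecOn generalizing ω' with
  | nil => rw [List.sublist_nil.mp h]; exact .refl _
  | append_singleton ω i ih =>
    have hred : cs.IsReduced ω := by simpa using hω.take ω.length
    have hasc : ℓ (π ω) < ℓ (π ω * s i) := by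
      have := hω.eq
      rw [wordProd_append, wordProd_singleton, List.length_append, List.length_singleton] at this
      rw [this, hred.eq]
      omega
    obtain ⟨ω₁, ω₂, rfl, h₁, h₂⟩ := List.sublist_append_iff.mp h
    rw [wordProd_append, wordProd_append, wordProd_singleton]
    rcases List.sublist_singleton.mp h₂ with rfl | rfl
    · rw [wordProd_nil, mul_one]
      exact (ih hred h₁).tail (bruhatStep_mul_simple hasc)
    · rw [wordProd_singleton]
      exact (ih hred h₁).mul_simple hasc

theorem BruhatChain.exists_sublist {u v : W} (h : cs.BruhatChain u v) {ζ : List B}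
    (hζ : cs.IsReduced ζ) (hv : π ζ = v) :
    ∃ ζ' : List B, ζ'.Sublist ζ ∧ cs.IsReduced ζ' ∧ π ζ' = u := by
  induction h using Relation.ReflTransGen.head_induction_on with
  | refl => exact ⟨ζ, .refl ζ, hζ, hv⟩
  | @head u w huw _ ih =>
    obtain ⟨ζ₁, hsub₁, hred₁, hprod₁⟩ := ih
    have hlt : ℓ (π ζ₁ * (u⁻¹ * w)) < ℓ (π ζ₁) := by
      rw [hprod₁, huw.mul_inv_mul]
      exact huw.2
    obtain ⟨j, -, herase⟩ := cs.exists_eraseIdx_of_length_mul_lt huw.1 hlt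
    obtain ⟨ζ', hsub', hred', hprod'⟩ := cs.exists_isReduced_sublist (ζ₁.eraseIdx j)
    refine ⟨ζ', (hsub'.trans (List.eraseIdx_sublist ζ₁ j)).trans hsub₁, hred', ?_⟩
    rw [hprod', ← herase, hprod₁, huw.mul_inv_mul]

theorem bruhatLE_iff_bruhatChain {u v : W} : bruhatLE cs u v ↔ cs.BruhatChain u v := by
  constructor
  · rintro ⟨ω, hω, rfl, ω', hsub, -, rfl⟩
    exact bruhatChain_wordProd_of_sublist hω hsub
  · intro h
    obtain ⟨ζ, hζ, rfl⟩ := cs.exists_isReduced v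
    obtain ⟨ζ', hsub, hred, rfl⟩ := h.exists_sublist hζ rfl
    exact ⟨ζ, hζ, rfl, ζ', hsub, hred, rfl⟩

theorem BruhatChain.eq_one {u : W} (h : cs.BruhatChain u 1) : u = 1 := by
  rcases Relation.ReflTransGen.cases_tail h with h1 | ⟨w, -, hw⟩
  · exact h1.symm
  · exact absurd hw.2 (by simp)

def IsProductBound (u v m : W) : Prop :=
  ∀ u' v', cs.BruhatChain u' u → cs.BruhatChain v' v → cs.BruhatChain (u' * v') m

theorem IsProductBound.mul_simple {u v m m' : W} {i : B} (h : cs.IsProductBound u v m)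
    (hv : ℓ v < ℓ (v * s i)) (hmm' : cs.BruhatChain m m')
    (hms : ∀ x, cs.BruhatChain x m → cs.BruhatChain (x * s i) m') :
    cs.IsProductBound u (v * s i) m' := by
  intro u' v' hu' hv'
  have hdesc : ℓ (v * s i * s i) < ℓ (v * s i) := by rwa [cs.simple_mul_simple_cancel_right]
  rcases hv'.le_mul_simple_or hdesc with h' | h' <;> rw [cs.simple_mul_simple_cancel_right] at h'
  · exact (h u' v' hu' h').trans hmm'
  · simpa [mul_assoc, cs.simple_mul_simple_cancel_right] using hms _ (h u' _ hu' h')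

theorem length_mul_conj_lt {a v : W} {i : B} (hv : ℓ v < ℓ (v * s i))
    (hav : ℓ (a * v * s i) < ℓ (a * v)) : ℓ (a * (v * s i * v⁻¹)) < ℓ a := by
  have hv' : cs.inversionSign v (s i) = 1 := by
    rcases Int.units_eq_one_or (cs.inversionSign v (s i)) with h | h
    · exact h
    · exact absurd (cs.length_mul_lt_of_inversionSign_eq_neg_one h) (by omega)
  apply cs.length_mul_lt_of_inversionSign_eq_neg_one
  have := cs.inversionSign_mul a v (s i)
  rwa [(inversionSign_eq_neg_one_iff cs (cs.isReflection_simple i)).mpr hav, hv', one_mul,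
    eq_comm] at this

theorem exists_demazureProduct (u v : W) :
    ∃ m : W, (∃ a, cs.BruhatChain a u ∧ m = a * v) ∧ (∃ b, cs.BruhatChain b v ∧ m = u * b) ∧
      cs.IsProductBound u v m := by
  by_cases hv : v = 1
  · subst hv
    refine ⟨u, ⟨u, .refl u, (mul_one u).symm⟩, ⟨1, .refl 1, (mul_one u).symm⟩, ?_⟩
    intro u' v' hu' hv'
    rwa [hv'.eq_one, mul_one]
  obtain ⟨i, hi⟩ := cs.exists_rightDescent_of_ne_one hv
  obtain ⟨v₁, rfl⟩ : ∃ v₁, v = v₁ * s i := ⟨v * s i, (cs.simple_mul_simple_cancel_right i).symm⟩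
  have hv₁ : ℓ v₁ < ℓ (v₁ * s i) := by
    have : ℓ (v₁ * s i * s i) < ℓ (v₁ * s i) := hi
    rwa [cs.simple_mul_simple_cancel_right] at this
  obtain ⟨_, ⟨a, ha, rfl⟩, ⟨b, hb, hab⟩, hmax⟩ := exists_demazureProduct u v₁
  rcases cs.length_mul_simple (a * v₁) i with hasc | hdesc
  · refine ⟨a * v₁ * s i, ⟨a, ha, mul_assoc _ _ _⟩,
      ⟨b * s i, hb.mul_simple hv₁, by rw [hab, mul_assoc]⟩, ?_⟩
    exact hmax.mul_simple hv₁ (Relation.ReflTransGen.single (bruhatStep_mul_simple (by omega)))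
      fun x hx => hx.mul_simple (by omega)
  · have hstep : cs.BruhatStep (a * (v₁ * s i * v₁⁻¹)) a :=
      bruhatStep_of_length_mul_lt ((cs.isReflection_simple i).conj v₁)
        (length_mul_conj_lt hv₁ (by omega))
    refine ⟨a * v₁, ⟨a * (v₁ * s i * v₁⁻¹), (Relation.ReflTransGen.single hstep).trans ha, ?_⟩,
      ⟨b, hb.tail (bruhatStep_mul_simple hv₁), hab⟩, ?_⟩
    · simp [mul_assoc, cs.simple_mul_simple_self]
    · exact hmax.mul_simple hv₁ (.refl _) fun x hx => hx.mul_simple_le (by omega)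
termination_by cs.length v

end CoxeterSystem

/-- The maxima of `{u'v : u' ≤ u}`, `{uv' : v' ≤ v}` and `{u'v' : u' ≤ u, v' ≤ v}`
all exist and coincide (the optimization operator `u ∘ v`). -/
theorem stmt1 {B W : Type*} [Group W] {M : CoxeterMatrix B} (cs : CoxeterSystem M W)
    (u v : W) :
    ∃ m : W,
      ((∃ u' : W, bruhatLE cs u' u ∧ m = u' * v) ∧
        ∀ x : W, (∃ u' : W, bruhatLE cs u' u ∧ x = u' * v) → bruhatLE cs x m) ∧
      ((∃ v' : W, bruhatLE cs v' v ∧ m = u * v') ∧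
        ∀ x : W, (∃ v' : W, bruhatLE cs v' v ∧ x = u * v') → bruhatLE cs x m) ∧
      ((∃ u' v' : W, bruhatLE cs u' u ∧ bruhatLE cs v' v ∧ m = u' * v') ∧
        ∀ x : W, (∃ u' v' : W, bruhatLE cs u' u ∧ bruhatLE cs v' v ∧ x = u' * v') →
          bruhatLE cs x m) := by
  simp only [CoxeterSystem.bruhatLE_iff_bruhatChain]
  obtain ⟨m, ⟨a, ha, hma⟩, ⟨b, hb, hmb⟩, hmax⟩ := cs.exists_demazureProduct u v
  refine ⟨m, ⟨⟨a, ha, hma⟩, ?_⟩, ⟨⟨b, hb, hmb⟩, ?_⟩, ⟨⟨a, v, ha, .refl v, hma⟩, ?_⟩⟩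
  · rintro x ⟨u', hu', rfl⟩
    exact hmax u' v hu' (.refl v)
  · rintro x ⟨v', hv', rfl⟩
    exact hmax u v' (.refl u) hv'
  · rintro x ⟨u', v', hu', hv', rfl⟩
    exact hmax u' v' hu' hv'
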